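/- arXiv:2201.08515 — 2 statements merged into one kernel-verified Lean document; each statement's English description precedes it below -/
import Mathlib

section
/- Conversely, if the symmetric trigonometric polynomial G(Ω) = g(0) + 2 Σ_{k=1}^{M-1} g(k) cos(kΩ) is strictly negative at some frequency Ω₀, then no real vector c : Fin M → ℝ solves the Orchard–Wilson equations Σ_n c(n) c(n+k) = g(k) exactly. -/
/-- Split a square double sum into diagonal and symmetrized lower-triangular parts. -/
lemma split_sq_sum (M : ℕ) (f : ℕ → ℕ → ℝ) :
    ∑ n ∈ Finset.range M, ∑ m ∈ Finset.range M, f n m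
      = (∑ n ∈ Finset.range M, f n n)
        + ∑ n ∈ Finset.range M, ∑ m ∈ Finset.range n, (f n m + f m n) := by
  induction M with
  | zero => simp
  | succ M ih =>
    rw [Finset.sum_range_succ]
    have h1 : ∑ n ∈ Finset.range M, ∑ m ∈ Finset.range (M+1), f n m
        = (∑ n ∈ Finset.range M, ∑ m ∈ Finset.range M, f n m)
          + ∑ n ∈ Finset.range M, f n M := by
      rw [← Finset.sum_add_distrib]
      exact Finset.sum_congr rfl fun n _ => Finset.sum_range_succ _ _
    rw [h1, ih, Finset.sum_range_succ (f := fun n => f n n),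
      Finset.sum_range_succ (f := fun n => ∑ m ∈ Finset.range n, (f n m + f m n)),
      Finset.sum_range_succ (f := fun m => f M m), Finset.sum_add_distrib]
    ring

/-- Reindex the lower triangle by the difference `k = n - m`. -/
lemma tri_reindex (M : ℕ) (f : ℕ → ℕ → ℝ) :
    ∑ n ∈ Finset.range M, ∑ m ∈ Finset.range n, f n m
      = ∑ k ∈ Finset.Icc 1 (M - 1), ∑ m ∈ Finset.range (M - k), f (m + k) m := by
  rw [Finset.sum_sigma', Finset.sum_sigma']
  apply Finset.sum_nbij' (fun p => ⟨p.1 - p.2, p.2⟩ : _ → (Σ _ : ℕ, ℕ))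
    (fun p => ⟨p.2 + p.1, p.2⟩)
  · rintro ⟨n, m⟩ h
    simp only [Finset.mem_sigma, Finset.mem_range, Finset.mem_Icc] at h ⊢
    omega
  · rintro ⟨k, m⟩ h
    simp only [Finset.mem_sigma, Finset.mem_range, Finset.mem_Icc] at h ⊢
    omega
  · rintro ⟨n, m⟩ h
    simp only [Finset.mem_sigma, Finset.mem_range] at h
    dsimp only
    have : m + (n - m) = n := by omega
    simp [this]
  · rintro ⟨k, m⟩ h
    simp
  · rintro ⟨n, m⟩ h
    simp only [Finset.mem_sigma, Finset.mem_range] at h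
    dsimp only
    have : m + (n - m) = n := by omega
    rw [this]

/-- If the symmetric extension `G(Ω) = g 0 + 2 ∑_{k=1}^{M-1} g k cos (k Ω)` is
strictly negative at some frequency, then the Orchard–Wilson equations have no
real solution. -/
theorem stmt9 (M : ℕ) (hM : 1 ≤ M) (g : ℕ → ℝ) (Ω₀ : ℝ)
    (hneg : g 0 + 2 * ∑ k ∈ Finset.Icc 1 (M - 1), g k * Real.cos (k * Ω₀) < 0) :
    ¬ ∃ c : ℕ → ℝ, ∀ k < M, ∑ n ∈ Finset.range (M - k), c n * c (n + k) = g k := by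
  rintro ⟨c, hc⟩
  set f : ℕ → ℕ → ℝ := fun n m => c n * c m * Real.cos (((n : ℝ) - m) * Ω₀) with hf
  set a := ∑ n ∈ Finset.range M, c n * Real.cos (n * Ω₀) with ha
  set b := ∑ n ∈ Finset.range M, c n * Real.sin (n * Ω₀) with hb
  have h1 : a ^ 2 + b ^ 2 = ∑ n ∈ Finset.range M, ∑ m ∈ Finset.range M, f n m := by
    rw [sq, sq, ha, hb, Finset.sum_mul_sum, Finset.sum_mul_sum, ← Finset.sum_add_distrib]
    refine Finset.sum_congr rfl fun n _ => ?_
    rw [← Finset.sum_add_distrib]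
    refine Finset.sum_congr rfl fun m _ => ?_
    have : ((n : ℝ) - m) * Ω₀ = n * Ω₀ - m * Ω₀ := by ring
    rw [hf]
    simp only [this, Real.cos_sub]
    ring
  have h2 : a ^ 2 + b ^ 2
      = g 0 + 2 * ∑ k ∈ Finset.Icc 1 (M - 1), g k * Real.cos (k * Ω₀) := by
    rw [h1, split_sq_sum, tri_reindex]
    have hg0 : ∑ n ∈ Finset.range M, f n n = g 0 := by
      rw [← hc 0 (by omega)]
      simp [hf]
    rw [hg0, Finset.mul_sum]
    congr 1
    refine Finset.sum_congr rfl fun k hk => ?_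
    rw [Finset.mem_Icc] at hk
    have hkM : k < M := by omega
    rw [← hc k hkM, Finset.sum_mul, Finset.mul_sum]
    refine Finset.sum_congr rfl fun m _ => ?_
    have e1 : ((m + k : ℕ) : ℝ) - (m : ℕ) = (k : ℝ) := by push_cast; ring
    have e2 : ((m : ℕ) : ℝ) - ((m + k : ℕ) : ℝ) = -(k : ℝ) := by push_cast; ring
    rw [hf]
    simp only [e1, e2, neg_mul, Real.cos_neg]
    ring
  have : (0 : ℝ) ≤ a ^ 2 + b ^ 2 := by positivity
  linarith
end

section
/- If the frequency response G(Ω) of an even finitely supported sequence g satisfies G(Ω) > 0 for all Ω, then every Toeplitz matrix G_N with entries g(i-j) is positive definite (for every size N). -/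
/-!
For real `x`, the quadratic form `x ⬝ᵥ G_N x` is the average over `[0, 2π]` of
`G(Ω) |∑ j, x j e^{i j Ω}|²`: since `g` is even, `∫ G(Ω) cos(mΩ) dΩ = 2π g(m)`. As `G` is
continuous and positive, it is at least `min G > 0` on the compact `[0, 2π]`, and the average of
`|∑ j, x j e^{i j Ω}|²` is `2π ∑ j, x j ^ 2` by orthogonality, so `x ⬝ᵥ G_N x ≥ (min G) ‖x‖² > 0`.
-/

open Real Finset Matrix intervalIntegral

theorem integral_cos_int_mul (n : ℤ) :
    ∫ x in (0)..(2 * π), cos (n * x) = if n = 0 then 2 * π else 0 := by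
  rcases eq_or_ne n 0 with rfl | hn
  · simp
  · have hn' : (n : ℝ) ≠ 0 := Int.cast_ne_zero.mpr hn
    rw [if_neg hn, integral_comp_mul_left cos hn', integral_cos, mul_zero, sin_zero,
      show (n : ℝ) * (2 * π) = ((2 * n : ℤ) : ℝ) * π by push_cast; ring, sin_int_mul_pi]
    simp

theorem integral_cos_int_mul_mul_cos_int_mul (k m : ℤ) :
    ∫ x in (0)..(2 * π), cos (k * x) * cos (m * x) =
      (if k = m then π else 0) + (if k = -m then π else 0) := by
  have product_to_sum : ∀ x : ℝ, cos (k * x) * cos (m * x) =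
      cos (((k - m : ℤ) : ℝ) * x) / 2 + cos (((k + m : ℤ) : ℝ) * x) / 2 := fun x => by
    push_cast
    rw [sub_mul, add_mul, cos_sub, cos_add]
    ring
  simp_rw [product_to_sum]
  rw [integral_add (by apply Continuous.intervalIntegrable; fun_prop)
      (by apply Continuous.intervalIntegrable; fun_prop),
    integral_div, integral_div, integral_cos_int_mul, integral_cos_int_mul]
  simp only [sub_eq_zero, add_eq_zero_iff_eq_neg]
  split_ifs <;> ring

theorem integral_sum_mul_cos_int_mul_mul_cos_int_mul {s : Finset ℤ} {g : ℤ → ℝ}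
    (hs : Function.support g ⊆ s) (m : ℤ) :
    ∫ Ω in (0)..(2 * π), (∑ k ∈ s, g k * cos (k * Ω)) * cos (m * Ω) = π * (g m + g (-m)) := by
  have pick : ∀ n, ∑ k ∈ s, g k * (if k = n then π else 0) = g n * π := fun n => by
    simp_rw [mul_ite, mul_zero, sum_ite_eq']
    exact ite_eq_left_iff.mpr fun hn => by
      rw [Function.notMem_support.mp fun h => hn (hs h), zero_mul]
  simp_rw [sum_mul, mul_assoc]
  rw [integral_finsetSum fun k _ => by apply Continuous.intervalIntegrable; fun_prop]
  simp_rw [integral_const_mul, integral_cos_int_mul_mul_cos_int_mul, mul_add, sum_add_distrib,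
    pick]
  ring

theorem sum_sum_mul_mul_cos_sub_nonneg {ι : Type*} (s : Finset ι) (x θ : ι → ℝ) :
    0 ≤ ∑ i ∈ s, ∑ j ∈ s, x i * x j * cos (θ i - θ j) := by
  have h : ∑ i ∈ s, ∑ j ∈ s, x i * x j * cos (θ i - θ j) =
      (∑ i ∈ s, x i * cos (θ i)) ^ 2 + (∑ i ∈ s, x i * sin (θ i)) ^ 2 := by
    simp_rw [sq, sum_mul_sum, ← sum_add_distrib, cos_sub]
    exact sum_congr rfl fun i _ => sum_congr rfl fun j _ => by ring
  rw [h]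
  positivity

/-- `energySpectrum x Ω = |∑ j, x j * exp (i j Ω)| ^ 2`. -/
noncomputable def energySpectrum {N : ℕ} (x : Fin N → ℝ) (Ω : ℝ) : ℝ :=
  ∑ i, ∑ j, x i * x j * cos ((((i : ℤ) - j : ℤ) : ℝ) * Ω)

theorem energySpectrum_nonneg {N : ℕ} (x : Fin N → ℝ) (Ω : ℝ) : 0 ≤ energySpectrum x Ω := by
  unfold energySpectrum
  convert sum_sum_mul_mul_cos_sub_nonneg univ x (fun i => (i : ℝ) * Ω) using 5
  push_cast
  ring

theorem continuous_energySpectrum {N : ℕ} (x : Fin N → ℝ) : Continuous (energySpectrum x) := by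
  unfold energySpectrum
  fun_prop

theorem integral_energySpectrum {N : ℕ} (x : Fin N → ℝ) :
    ∫ Ω in (0)..(2 * π), energySpectrum x Ω = 2 * π * (x ⬝ᵥ x) := by
  unfold energySpectrum
  rw [integral_finsetSum fun i _ => by apply Continuous.intervalIntegrable; fun_prop,
    dotProduct, mul_sum]
  refine sum_congr rfl fun i _ => ?_
  rw [integral_finsetSum fun j _ => by apply Continuous.intervalIntegrable; fun_prop]
  simp_rw [integral_const_mul, integral_cos_int_mul, sub_eq_zero, Nat.cast_inj, Fin.val_inj,
    mul_ite, mul_zero, sum_ite_eq, mem_univ, if_true]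
  ring

theorem integral_mul_energySpectrum {s : Finset ℤ} {g : ℤ → ℝ} (heven : ∀ k, g (-k) = g k)
    (hs : Function.support g ⊆ s) {N : ℕ} (x : Fin N → ℝ) :
    ∫ Ω in (0)..(2 * π), (∑ k ∈ s, g k * cos (k * Ω)) * energySpectrum x Ω =
      2 * π * (x ⬝ᵥ (Matrix.of (fun i j : Fin N => g ((i : ℤ) - j)) *ᵥ x)) := by
  unfold energySpectrum
  simp_rw [dotProduct, mulVec, dotProduct, of_apply, mul_sum,
    mul_left_comm _ (x _ * x _)]
  rw [integral_finsetSum fun i _ => by apply Continuous.intervalIntegrable; fun_prop]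
  refine sum_congr rfl fun i _ => ?_
  rw [integral_finsetSum fun j _ => by apply Continuous.intervalIntegrable; fun_prop]
  refine sum_congr rfl fun j _ => ?_
  rw [integral_const_mul, integral_sum_mul_cos_int_mul_mul_cos_int_mul hs, heven]
  ring

theorem mul_dotProduct_self_le_dotProduct_toeplitz_mulVec {s : Finset ℤ} {g : ℤ → ℝ}
    (heven : ∀ k, g (-k) = g k) (hs : Function.support g ⊆ s) {c : ℝ}
    (hc : ∀ Ω ∈ Set.Icc 0 (2 * π), c ≤ ∑ k ∈ s, g k * cos (k * Ω)) {N : ℕ} (x : Fin N → ℝ) :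
    c * (x ⬝ᵥ x) ≤ x ⬝ᵥ (Matrix.of (fun i j : Fin N => g ((i : ℤ) - j)) *ᵥ x) := by
  have h : ∫ Ω in (0)..(2 * π), c * energySpectrum x Ω ≤
      ∫ Ω in (0)..(2 * π), (∑ k ∈ s, g k * cos (k * Ω)) * energySpectrum x Ω := by
    have hT := continuous_energySpectrum x
    refine integral_mono_on (by positivity) ((continuous_const.mul hT).intervalIntegrable _ _)
      (Continuous.intervalIntegrable (by fun_prop) _ _)
      fun Ω hΩ => mul_le_mul_of_nonneg_right (hc Ω hΩ) (energySpectrum_nonneg x Ω)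
  rw [integral_const_mul, integral_energySpectrum, integral_mul_energySpectrum heven hs,
    mul_left_comm] at h
  exact le_of_mul_le_mul_left h (by positivity)

/-- If the frequency response of an even finitely supported sequence `g` is
strictly positive at every frequency, then every Toeplitz matrix built from `g`
is positive definite. -/
theorem stmt11 (g : ℤ → ℝ) (heven : ∀ k : ℤ, g (-k) = g k)
    (hfin : (Function.support g).Finite)
    (hpos : ∀ Ω : ℝ, 0 < ∑' k : ℤ, g k * Real.cos (k * Ω)) :
    ∀ N : ℕ, (Matrix.of fun i j : Fin N => g ((i : ℤ) - (j : ℤ))).PosDef := by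
  intro N
  have hs : Function.support g ⊆ hfin.toFinset := hfin.coe_toFinset.ge
  have hsymbol : ∀ Ω, 0 < ∑ k ∈ hfin.toFinset, g k * cos (k * Ω) := fun Ω => by
    simpa only [tsum_eq_sum' ((Function.support_mul_subset_left _ _).trans hs)] using hpos Ω
  have hcont : Continuous fun Ω => ∑ k ∈ hfin.toFinset, g k * cos (k * Ω) := by fun_prop
  obtain ⟨Ω₀, -, hΩ₀⟩ :=
    isCompact_Icc.exists_isMinOn (Set.nonempty_Icc.mpr two_pi_pos.le) hcont.continuousOn
  rw [Matrix.posDef_iff_dotProduct_mulVec]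
  refine ⟨?_, fun x hx => ?_⟩
  · ext i j
    simp [← heven ((j : ℤ) - i)]
  · rw [star_trivial]
    calc 0 < (∑ k ∈ hfin.toFinset, g k * cos (k * Ω₀)) * (x ⬝ᵥ x) :=
          mul_pos (hsymbol Ω₀) (by simpa using dotProduct_star_self_pos_iff.mpr hx)
      _ ≤ _ := mul_dotProduct_self_le_dotProduct_toeplitz_mulVec heven hs hΩ₀ x
end
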